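/- arXiv:1505.00528 — 3 statements merged into one kernel-verified Lean document; each statement's English description precedes it below -/
import Mathlib

section
/- Let ε > 0 and 0 < a < 1. Then for every continuously differentiable function f : [0,∞) → ℝ whose support is contained in [0, a), one has ∫₀^∞ f(r)² / ( r (−ln r)^{2+ε} ) dr ≤ (1 / (ε (−ln a)^ε)) ∫₀^∞ f′(r)² r dr. -/
/-!
For `0 < r ≤ a` write `f r = -∫_r^a f'` and split `|f'| = (|f'| √t) · (√t)⁻¹`; then
Cauchy–Schwarz gives `f(r)² ≤ (∫ f'(t)² t dt) · log (a / r) ≤ (∫ f'(t)² t dt) · (-log r)`.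
Dividing by `r (-log r)^(2+ε)` leaves the weight `r⁻¹ (-log r)^(-(1+ε))`, whose integral over
`(0, a]` is `(-log a)^(-ε) / ε`, since it is the derivative of `(-log r)^(-ε) / ε`.
-/

open MeasureTheory Set Real Filter Topology

theorem sq_integral_mul_le_integral_sq_mul_integral_sq {α : Type*} [MeasurableSpace α]
    {μ : Measure α} {u v : α → ℝ} (hu : 0 ≤ᵐ[μ] u) (hv : 0 ≤ᵐ[μ] v) (hu2 : MemLp u 2 μ)
    (hv2 : MemLp v 2 μ) :
    (∫ x, u x * v x ∂μ) ^ 2 ≤ (∫ x, u x ^ 2 ∂μ) * ∫ x, v x ^ 2 ∂μ := by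
  have hholder := integral_mul_le_Lp_mul_Lq_of_nonneg Real.HolderConjugate.two_two hu hv
    (by simpa using hu2) (by simpa using hv2)
  have hnn : 0 ≤ ∫ x, u x * v x ∂μ :=
    integral_nonneg_of_ae (by filter_upwards [hu, hv] with x hux hvx using mul_nonneg hux hvx)
  simp only [rpow_two] at hholder
  calc (∫ x, u x * v x ∂μ) ^ 2
      ≤ ((∫ x, u x ^ 2 ∂μ) ^ (1 / 2 : ℝ) * (∫ x, v x ^ 2 ∂μ) ^ (1 / 2 : ℝ)) ^ 2 :=
        pow_le_pow_left₀ hnn hholder 2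
    _ = (∫ x, u x ^ 2 ∂μ) * ∫ x, v x ^ 2 ∂μ := by
        rw [mul_pow, ← sqrt_eq_rpow, ← sqrt_eq_rpow,
          sq_sqrt (integral_nonneg fun x => sq_nonneg _),
          sq_sqrt (integral_nonneg fun x => sq_nonneg _)]

theorem continuousOn_neg_log_rpow_neg {ε a : ℝ} (hε : 0 < ε) (ha1 : a < 1) :
    ContinuousOn (fun r : ℝ => (-log r) ^ (-ε)) (Icc 0 a) := by
  intro x hx
  rcases hx.1.eq_or_lt with rfl | hx0
  · -- `log 0 = 0` and `0 ^ (-ε) = 0` happen to agree with the limit at `0⁺`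
    have hlim : Tendsto (fun r : ℝ => (-log r) ^ (-ε)) (𝓝[>] 0) (𝓝 0) :=
      (tendsto_rpow_neg_atTop hε).comp (tendsto_neg_atBot_atTop.comp tendsto_log_nhdsGT_zero)
    rw [← continuousWithinAt_sdiff_self, ContinuousWithinAt, log_zero, neg_zero,
      zero_rpow (neg_ne_zero.mpr hε.ne')]
    exact hlim.mono_left (nhdsWithin_mono _ fun y hy => lt_of_le_of_ne hy.1.1 (Ne.symm hy.2))
  · have hlog : 0 < -log x := neg_pos.mpr (log_neg hx0 (hx.2.trans_lt ha1))
    exact ((continuousAt_log hx0.ne').neg.rpow_const (Or.inl hlog.ne')).continuousWithinAt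

theorem hasDerivAt_neg_log_rpow_neg_div {ε x : ℝ} (hε : ε ≠ 0) (hx0 : 0 < x) (hx1 : x < 1) :
    HasDerivAt (fun r : ℝ => (-log r) ^ (-ε) / ε) (x⁻¹ * (-log x) ^ (-(1 + ε))) x := by
  have hlog : 0 < -log x := neg_pos.mpr (log_neg hx0 hx1)
  refine (((hasDerivAt_rpow_const (p := -ε) (Or.inl hlog.ne')).comp x
    (hasDerivAt_log hx0.ne').neg).div_const ε).congr_deriv ?_
  rw [show -ε - 1 = -(1 + ε) by ring]
  field_simp

theorem integrableOn_inv_mul_neg_log_rpow {ε a : ℝ} (hε : 0 < ε) (ha1 : a < 1) :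
    IntegrableOn (fun r : ℝ => r⁻¹ * (-log r) ^ (-(1 + ε))) (Ioc 0 a) :=
  intervalIntegral.integrableOn_deriv_of_nonneg
    ((continuousOn_neg_log_rpow_neg hε ha1).div_const ε)
    (fun _ hx => hasDerivAt_neg_log_rpow_neg_div hε.ne' hx.1 (hx.2.trans ha1))
    (fun _ hx => mul_nonneg (inv_nonneg.mpr hx.1.le)
      (rpow_nonneg (neg_nonneg.mpr (log_nonpos hx.1.le (hx.2.trans ha1).le)) _))

theorem integral_inv_mul_neg_log_rpow {ε a : ℝ} (hε : 0 < ε) (ha0 : 0 < a) (ha1 : a < 1) :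
    ∫ r in Ioc 0 a, r⁻¹ * (-log r) ^ (-(1 + ε)) = (-log a) ^ (-ε) / ε := by
  rw [← intervalIntegral.integral_of_le ha0.le,
    intervalIntegral.integral_eq_sub_of_hasDerivAt_of_le ha0.le
      ((continuousOn_neg_log_rpow_neg hε ha1).div_const ε)
      (fun _ hx => hasDerivAt_neg_log_rpow_neg_div hε.ne' hx.1 (hx.2.trans ha1))
      ((intervalIntegrable_iff_integrableOn_Ioc_of_le ha0.le).mpr
        (integrableOn_inv_mul_neg_log_rpow hε ha1)),
    log_zero, neg_zero, zero_rpow (neg_ne_zero.mpr hε.ne'), zero_div, sub_zero]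

theorem ContinuousOn.memLp_isCompact {X E : Type*} [TopologicalSpace X] [MeasurableSpace X]
    [OpensMeasurableSpace X] [T2Space X] [NormedAddCommGroup E] {μ : Measure X}
    [IsFiniteMeasureOnCompacts μ] [SecondCountableTopologyEither X E] {s : Set X} {f : X → E}
    (hs : IsCompact s) (hf : ContinuousOn f s) (p : ENNReal) : MemLp f p (μ.restrict s) := by
  have : IsFiniteMeasure (μ.restrict s) := isFiniteMeasure_restrict.mpr hs.measure_lt_top.ne
  obtain ⟨C, hC⟩ := hs.exists_bound_of_continuousOn hf
  exact MemLp.of_bound (hf.aestronglyMeasurable hs.measurableSet) C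
    (ae_restrict_of_forall_mem hs.measurableSet hC)

theorem sq_le_setIntegral_deriv_sq_mul_mul_log {f : ℝ → ℝ} (hf : ContDiff ℝ 1 f) {r b : ℝ}
    (hr : 0 < r) (hrb : r ≤ b) (hfb : f b = 0) :
    f r ^ 2 ≤ (∫ t in Ioc r b, deriv f t ^ 2 * t) * log (b / r) := by
  have hd : Continuous (deriv f) := hf.continuous_deriv le_rfl
  have hpos : ∀ t ∈ Icc r b, 0 < t := fun t ht => hr.trans_le ht.1
  have hftc : f r = -∫ t in Ioc r b, deriv f t := by
    rw [← intervalIntegral.integral_of_le hrb, intervalIntegral.integral_deriv_eq_sub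
      (fun x _ => hf.differentiable one_ne_zero x) (hd.intervalIntegrable _ _), hfb]
    ring
  set u : ℝ → ℝ := fun t => |deriv f t| * √t
  set v : ℝ → ℝ := fun t => (√t)⁻¹
  have huv : ∫ t in Ioc r b, |deriv f t| = ∫ t in Ioc r b, u t * v t :=
    setIntegral_congr_fun measurableSet_Ioc fun t ht => by
      have : √t ≠ 0 := (sqrt_pos.mpr (hpos t (Ioc_subset_Icc_self ht))).ne'
      simp only [u, v]
      field_simp
  have hu2 : ∫ t in Ioc r b, u t ^ 2 = ∫ t in Ioc r b, deriv f t ^ 2 * t :=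
    setIntegral_congr_fun measurableSet_Ioc fun t ht => by
      simp only [u, mul_pow, sq_abs, sq_sqrt (hpos t (Ioc_subset_Icc_self ht)).le]
  have hv2 : ∫ t in Ioc r b, v t ^ 2 = log (b / r) := by
    rw [setIntegral_congr_fun measurableSet_Ioc (g := fun t => t⁻¹) fun t ht => by
        simp only [v, inv_pow, sq_sqrt (hpos t (Ioc_subset_Icc_self ht)).le],
      ← intervalIntegral.integral_of_le hrb, integral_inv_of_pos hr (hr.trans_le hrb)]
  have hmono : volume.restrict (Ioc r b) ≤ volume.restrict (Icc r b) :=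
    Measure.restrict_mono Ioc_subset_Icc_self le_rfl
  have hv_cont : ContinuousOn v (Icc r b) :=
    continuous_sqrt.continuousOn.inv₀ fun t ht => (sqrt_pos.mpr (hpos t ht)).ne'
  have hCS := sq_integral_mul_le_integral_sq_mul_integral_sq (μ := volume.restrict (Ioc r b))
    (u := u) (v := v) (ae_of_all _ fun t => by positivity) (ae_of_all _ fun t => by positivity)
    (((hd.abs.mul continuous_sqrt).continuousOn.memLp_isCompact isCompact_Icc 2).mono_measure
      hmono)
    ((hv_cont.memLp_isCompact isCompact_Icc 2).mono_measure hmono)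
  rw [← huv, hu2, hv2] at hCS
  calc f r ^ 2 = |∫ t in Ioc r b, deriv f t| ^ 2 := by rw [hftc, neg_sq, sq_abs]
    _ ≤ (∫ t in Ioc r b, |deriv f t|) ^ 2 :=
        pow_le_pow_left₀ (abs_nonneg _) abs_integral_le_integral_abs 2
    _ ≤ _ := hCS

theorem sq_div_mul_neg_log_rpow_le {f : ℝ → ℝ} (hf : ContDiff ℝ 1 f) {a r : ℝ} (ha1 : a < 1)
    (hfa : f a = 0) (hint : IntegrableOn (fun t => deriv f t ^ 2 * t) (Ioi 0)) (ε : ℝ)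
    (hr : r ∈ Ioc 0 a) :
    f r ^ 2 / (r * (-log r) ^ (2 + ε)) ≤
      (∫ t in Ioi 0, deriv f t ^ 2 * t) * (r⁻¹ * (-log r) ^ (-(1 + ε))) := by
  set I := ∫ t in Ioi 0, deriv f t ^ 2 * t
  have hlog : 0 < -log r := neg_pos.mpr (log_neg hr.1 (hr.2.trans_lt ha1))
  have hlog_div : log (a / r) ≤ -log r := by
    rw [log_div (hr.1.trans_le hr.2).ne' hr.1.ne']
    linarith [log_neg (hr.1.trans_le hr.2) ha1]
  have hpiece : ∫ t in Ioc r a, deriv f t ^ 2 * t ≤ I :=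
    setIntegral_mono_set hint
      (ae_restrict_of_forall_mem measurableSet_Ioi fun t ht => mul_nonneg (sq_nonneg _) ht.le)
      (ae_of_all _ fun t ht => hr.1.trans ht.1)
  have hbound : f r ^ 2 ≤ I * -log r :=
    (sq_le_setIntegral_deriv_sq_mul_mul_log hf hr.1 hr.2 hfa).trans
      (mul_le_mul hpiece hlog_div (log_nonneg ((one_le_div hr.1).mpr hr.2))
        (setIntegral_nonneg measurableSet_Ioi fun t ht => mul_nonneg (sq_nonneg _) ht.le))
  calc f r ^ 2 / (r * (-log r) ^ (2 + ε)) ≤ I * -log r / (r * (-log r) ^ (2 + ε)) :=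
        div_le_div_of_nonneg_right hbound (mul_pos hr.1 (rpow_pos_of_pos hlog _)).le
    _ = I * (r⁻¹ * (-log r) ^ (-(1 + ε))) := by
        rw [rpow_neg hlog.le, show 2 + ε = 1 + (1 + ε) by ring, rpow_add hlog, rpow_one]
        have := hr.1.ne'
        have := neg_ne_zero.mp hlog.ne'
        field_simp

/-- Logarithmically weighted radial Hardy inequality: for `ε > 0`,
`0 < a < 1` and any `C¹` function `f` on `[0,∞)` supported in `[0, a)`,
`∫₀^∞ f(r)² / (r (−ln r)^{2+ε}) dr ≤ (1/(ε (−ln a)^ε)) ∫₀^∞ f′(r)² r dr`. -/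
theorem stmt_0 (ε a : ℝ) (hε : 0 < ε) (ha0 : 0 < a) (ha1 : a < 1)
    (f : ℝ → ℝ) (hf : ContDiff ℝ 1 f)
    (hsupp : Function.support f ⊆ Set.Ico 0 a) :
    ∫ r in Set.Ioi (0:ℝ), f r ^ 2 / (r * (-Real.log r) ^ (2 + ε)) ≤
      (1 / (ε * (-Real.log a) ^ ε)) * ∫ r in Set.Ioi (0:ℝ), deriv f r ^ 2 * r := by
  have hfa : f a = 0 := Function.notMem_support.mp fun h => (hsupp h).2.false
  have hsupp_compact : HasCompactSupport f :=
    HasCompactSupport.of_support_subset_isCompact isCompact_Icc (hsupp.trans Ico_subset_Icc_self)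
  have hint : IntegrableOn (fun t => deriv f t ^ 2 * t) (Ioi 0) :=
    (((hf.continuous_deriv le_rfl).pow 2).mul continuous_id).integrable_of_hasCompactSupport
      (hsupp_compact.deriv.comp_left (g := fun x : ℝ => x ^ 2) (zero_pow two_ne_zero)).mul_right
      |>.integrableOn
  have hvanish : ∀ r ∈ Ioi 0 \ Ioc 0 a, f r ^ 2 / (r * (-log r) ^ (2 + ε)) = 0 := fun r hr => by
    rw [Function.notMem_support.mp fun h => hr.2 ⟨hr.1, (hsupp h).2.le⟩]
    simp
  rw [setIntegral_eq_of_subset_of_forall_sdiff_eq_zero measurableSet_Ioi Ioc_subset_Ioi_self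
    hvanish]
  calc ∫ r in Ioc 0 a, f r ^ 2 / (r * (-log r) ^ (2 + ε))
      ≤ ∫ r in Ioc 0 a, (∫ t in Ioi 0, deriv f t ^ 2 * t) * (r⁻¹ * (-log r) ^ (-(1 + ε))) :=
        integral_mono_of_nonneg
          (ae_restrict_of_forall_mem measurableSet_Ioc fun r hr => by
            have := hr.1
            have : 0 < -log r := neg_pos.mpr (log_neg hr.1 (hr.2.trans_lt ha1))
            positivity)
          ((integrableOn_inv_mul_neg_log_rpow hε ha1).const_mul _)
          (ae_restrict_of_forall_mem measurableSet_Ioc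
            fun r hr => sq_div_mul_neg_log_rpow_le hf ha1 hfa hint ε hr)
    _ = (1 / (ε * (-log a) ^ ε)) * ∫ t in Ioi 0, deriv f t ^ 2 * t := by
        rw [integral_const_mul, integral_inv_mul_neg_log_rpow hε ha0 ha1,
          rpow_neg (neg_pos.mpr (log_neg ha0 ha1)).le]
        ring
end

section
/- Let T > 0 and let v_r, v₃, ω_r, ω₃ : (0,∞) × ℝ × (0,T) → ℝ be smooth functions of (r, z, t) satisfying (∂_r² + (1/r)∂_r + ∂_z² − 1/r²) ω_r − (v_r ∂_r + v₃ ∂_z) ω_r + ω_r ∂_r v_r + ω₃ ∂_z v_r − ∂_t ω_r = 0 on (0,∞) × ℝ × (0,T). Then J := ω_r / r satisfies (∂_r² + (1/r)∂_r + ∂_z²) J − (v_r ∂_r + v₃ ∂_z) J + (2/r) ∂_r J + ( ω_r ∂_r + ω₃ ∂_z )( v_r / r ) − ∂_t J = 0 on (0,∞) × ℝ × (0,T). -/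
/-- Partial derivative in the first (radial) variable `r`. -/
noncomputable def dR (f : ℝ × ℝ × ℝ → ℝ) (p : ℝ × ℝ × ℝ) : ℝ :=
  deriv (fun s => f (s, p.2.1, p.2.2)) p.1

/-- Partial derivative in the second (vertical) variable `z`. -/
noncomputable def dZ (f : ℝ × ℝ × ℝ → ℝ) (p : ℝ × ℝ × ℝ) : ℝ :=
  deriv (fun s => f (p.1, s, p.2.2)) p.2.1

/-- Partial derivative in the third (time) variable `t`. -/
noncomputable def dT (f : ℝ × ℝ × ℝ → ℝ) (p : ℝ × ℝ × ℝ) : ℝ :=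
  deriv (fun s => f (p.1, p.2.1, s)) p.2.2

/-- The space-time domain `(0,∞) × ℝ × (0,T)` in the variables `(r, z, t)`. -/
def dom (T : ℝ) : Set (ℝ × ℝ × ℝ) := Set.Ioi 0 ×ˢ Set.univ ×ˢ Set.Ioo 0 T


private lemma keyZ (f : ℝ × ℝ × ℝ → ℝ) (q : ℝ × ℝ × ℝ) :
    dZ (fun q' => f q' / q'.1) q = dZ f q / q.1 := by
  unfold dZ
  exact deriv_div_const _

private lemma keyT (f : ℝ × ℝ × ℝ → ℝ) (q : ℝ × ℝ × ℝ) :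
    dT (fun q' => f q' / q'.1) q = dT f q / q.1 := by
  unfold dT
  exact deriv_div_const _

/-- If `ω_r` satisfies
`(∂_r² + (1/r)∂_r + ∂_z² − 1/r²)ω_r − (v_r∂_r + v₃∂_z)ω_r + ω_r∂_r v_r + ω₃∂_z v_r − ∂_tω_r = 0`
on `(0,∞) × ℝ × (0,T)`, then `J = ω_r/r` satisfies
`(∂_r² + (1/r)∂_r + ∂_z²)J − (v_r∂_r + v₃∂_z)J + (2/r)∂_r J + (ω_r∂_r + ω₃∂_z)(v_r/r) − ∂_t J = 0`
there. -/
theorem stmt_7 (T : ℝ) (hT : 0 < T) (vr v3 ωr ω3 : ℝ × ℝ × ℝ → ℝ)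
    (hvr : ContDiffOn ℝ (⊤ : ℕ∞) vr (dom T)) (hv3 : ContDiffOn ℝ (⊤ : ℕ∞) v3 (dom T))
    (hωr : ContDiffOn ℝ (⊤ : ℕ∞) ωr (dom T)) (hω3 : ContDiffOn ℝ (⊤ : ℕ∞) ω3 (dom T))
    (heq : ∀ p ∈ dom T,
      dR (dR ωr) p + (1 / p.1) * dR ωr p + dZ (dZ ωr) p - ωr p / p.1 ^ 2 -
        (vr p * dR ωr p + v3 p * dZ ωr p) + ωr p * dR vr p + ω3 p * dZ vr p -
        dT ωr p = 0) :
    ∀ p ∈ dom T,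
      dR (dR (fun q => ωr q / q.1)) p + (1 / p.1) * dR (fun q => ωr q / q.1) p +
        dZ (dZ (fun q => ωr q / q.1)) p -
        (vr p * dR (fun q => ωr q / q.1) p + v3 p * dZ (fun q => ωr q / q.1) p) +
        (2 / p.1) * dR (fun q => ωr q / q.1) p +
        (ωr p * dR (fun q => vr q / q.1) p + ω3 p * dZ (fun q => vr q / q.1) p) -
        dT (fun q => ωr q / q.1) p = 0 := by
  intro p hp
  obtain ⟨r, z, t⟩ := p
  obtain ⟨hr, -, ht0, htT⟩ := hp
  have hr' := Set.mem_Ioi.mp hr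
  have hline : ContDiff ℝ (⊤ : ℕ∞) (fun s : ℝ => ((s, z, t) : ℝ × ℝ × ℝ)) :=
    contDiff_id.prodMk contDiff_const
  have hmaps : Set.MapsTo (fun s : ℝ => ((s, z, t) : ℝ × ℝ × ℝ)) (Set.Ioi 0) (dom T) :=
    fun s hs => ⟨hs, Set.mem_univ _, ht0, htT⟩
  have hgwC : ContDiffOn ℝ (⊤ : ℕ∞) (fun s => ωr (s, z, t)) (Set.Ioi 0) :=
    hωr.comp hline.contDiffOn hmaps
  have hgvC : ContDiffOn ℝ (⊤ : ℕ∞) (fun s => vr (s, z, t)) (Set.Ioi 0) :=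
    hvr.comp hline.contDiffOn hmaps
  have hgw'C : ContDiffOn ℝ (⊤ : ℕ∞) (deriv (fun s => ωr (s, z, t))) (Set.Ioi 0) :=
    hgwC.deriv_of_isOpen isOpen_Ioi (by simp)
  have dAt : ∀ {f : ℝ → ℝ}, ContDiffOn ℝ (⊤ : ℕ∞) f (Set.Ioi 0) → ∀ s ∈ Set.Ioi (0:ℝ),
      DifferentiableAt ℝ f s := fun h s hs =>
    (h.contDiffAt (isOpen_Ioi.mem_nhds hs)).differentiableAt (by simp)
  have dgw := dAt hgwC r hr
  have dgw' := dAt hgw'C r hr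
  have dgv := dAt hgvC r hr
  -- first radial derivative of J
  have h4 : dR (fun q => ωr q / q.1) (r, z, t)
      = (deriv (fun s => ωr (s, z, t)) r * r - ωr (r, z, t) * 1) / r ^ 2 :=
    (dgw.hasDerivAt.div (hasDerivAt_id r) hr'.ne').deriv
  -- second radial derivative of J
  have hev : (fun s => dR (fun q => ωr q / q.1) (s, z, t)) =ᶠ[nhds r]
      (fun s => (deriv (fun u => ωr (u, z, t)) s * s - ωr (s, z, t) * 1) / s ^ 2) := by
    filter_upwards [isOpen_Ioi.mem_nhds hr] with s hs
    exact ((dAt hgwC s hs).hasDerivAt.div (hasDerivAt_id s) (ne_of_gt hs)).deriv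
  have h5 : dR (dR (fun q => ωr q / q.1)) (r, z, t)
      = deriv (deriv (fun s => ωr (s, z, t))) r / r
        - 2 * deriv (fun s => ωr (s, z, t)) r / r ^ 2 + 2 * ωr (r, z, t) / r ^ 3 := by
    have hnum : HasDerivAt (fun s => deriv (fun u => ωr (u, z, t)) s * s - ωr (s, z, t) * 1)
        (deriv (deriv (fun u => ωr (u, z, t))) r * r + deriv (fun u => ωr (u, z, t)) r * 1
          - deriv (fun u => ωr (u, z, t)) r * 1) r :=
      (dgw'.hasDerivAt.mul (hasDerivAt_id r)).sub (dgw.hasDerivAt.mul_const 1)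
    have hden : HasDerivAt (fun s : ℝ => s ^ 2) ((2 : ℕ) * r ^ 1) r := hasDerivAt_pow 2 r
    have hdd := (hnum.div hden (pow_ne_zero 2 hr'.ne')).deriv
    have h0 : dR (dR (fun q => ωr q / q.1)) (r, z, t)
        = deriv (fun s => dR (fun q => ωr q / q.1) (s, z, t)) r := rfl
    simp only [Pi.div_def] at hdd
    rw [h0, hev.deriv_eq, hdd]
    field_simp
    ring
  -- radial derivative of vr / r
  have h8 : dR (fun q => vr q / q.1) (r, z, t)
      = (deriv (fun s => vr (s, z, t)) r * r - vr (r, z, t) * 1) / r ^ 2 :=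
    (dgv.hasDerivAt.div (hasDerivAt_id r) hr'.ne').deriv
  -- vertical and time derivatives
  have hz1 : dZ (fun q => ωr q / q.1) (r, z, t) = dZ ωr (r, z, t) / r := keyZ ωr (r, z, t)
  have hz2 : dZ (dZ (fun q => ωr q / q.1)) (r, z, t) = dZ (dZ ωr) (r, z, t) / r := by
    have he : dZ (fun q => ωr q / q.1) = fun q => dZ ωr q / q.1 := funext (keyZ ωr)
    rw [he]; exact keyZ (dZ ωr) (r, z, t)
  have hz3 : dZ (fun q => vr q / q.1) (r, z, t) = dZ vr (r, z, t) / r := keyZ vr (r, z, t)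
  have hT1 : dT (fun q => ωr q / q.1) (r, z, t) = dT ωr (r, z, t) / r := keyT ωr (r, z, t)
  -- identifications of dR with slice derivatives
  have h6 : dR (dR ωr) (r, z, t) = deriv (deriv (fun s => ωr (s, z, t))) r := rfl
  have h6b : dR ωr (r, z, t) = deriv (fun s => ωr (s, z, t)) r := rfl
  have h7 : dR vr (r, z, t) = deriv (fun s => vr (s, z, t)) r := rfl
  have H := heq (r, z, t) ⟨hr, Set.mem_univ _, ht0, htT⟩
  rw [h6, h6b, h7] at H
  simp only [] at H ⊢
  rw [h4, h5, h8, hz1, hz2, hz3, hT1]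
  have hrne : r ≠ 0 := hr'.ne'
  field_simp at H ⊢
  linear_combination H
end

section
/- Let v_θ, v₃ : [0,∞) × ℝ → ℝ be twice continuously differentiable, let w₃ : [0,∞) × ℝ → ℝ be continuously differentiable with r w₃(r,z) = ∂_r( r v_θ )(r,z) for all (r,z), and let φ : [0,∞) × ℝ → ℝ be continuously differentiable and compactly supported. Then ∫₀^∞ ∫_ℝ [ ∂_r( r v_θ ) ∂₃ v₃ − r ∂₃ v_θ ∂_r v₃ ] w₃ φ² dz dr = ∫₀^∞ ∫_ℝ r v_θ [ − ∂₃ v₃ ∂_r w₃ φ² − ∂₃ v₃ w₃ ∂_r(φ²) + ∂_r v₃ ∂₃ w₃ φ² + ∂_r v₃ w₃ ∂₃(φ²) ] dz dr. -/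
open MeasureTheory

/-- Partial derivative in the first (radial) variable of a function of `(r, z)`. -/
noncomputable def pdr2 (f : ℝ × ℝ → ℝ) (p : ℝ × ℝ) : ℝ :=
  deriv (fun s => f (s, p.2)) p.1

/-- Partial derivative in the second (vertical) variable of a function of `(r, z)`. -/
noncomputable def pdz2 (f : ℝ × ℝ → ℝ) (p : ℝ × ℝ) : ℝ :=
  deriv (fun s => f (p.1, s)) p.2

/-!
Put `P = r v_θ ∂₃v₃ w₃ φ²` and `Q = r v_θ ∂_r v₃ w₃ φ²`. By the product rule, and because
the mixed derivatives `∂_r ∂₃ v₃ = ∂₃ ∂_r v₃` cancel, the left integrand equals the right one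
plus `∂_r P - ∂₃ Q`. Both `P` and `Q` are `C¹` with compact support, so `∫_ℝ ∂₃ Q dz = 0`, and
after Fubini `∫₀^∞ ∂_r P dr = -P(0, z) = 0` thanks to the factor `r`.
-/

open Set Filter Topology Function

section PartialDerivatives

variable {f : ℝ × ℝ → ℝ}

theorem hasDerivAt_pdr2 {r z : ℝ} (hf : DifferentiableAt ℝ f (r, z)) :
    HasDerivAt (fun s => f (s, z)) (pdr2 f (r, z)) r :=
  (hf.comp r (differentiableAt_id.prodMk (differentiableAt_const z))).hasDerivAt

theorem hasDerivAt_pdz2 {r z : ℝ} (hf : DifferentiableAt ℝ f (r, z)) :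
    HasDerivAt (fun s => f (r, s)) (pdz2 f (r, z)) z :=
  (hf.comp z ((differentiableAt_const r).prodMk differentiableAt_id)).hasDerivAt

theorem pdr2_eq_fderiv {p : ℝ × ℝ} (hf : DifferentiableAt ℝ f p) :
    pdr2 f p = fderiv ℝ f p (1, 0) :=
  (hasDerivAt_pdr2 hf).unique <|
    hf.hasFDerivAt.comp_hasDerivAt p.1
      ((hasDerivAt_id p.1).prodMk (hasDerivAt_const p.1 p.2))

theorem pdz2_eq_fderiv {p : ℝ × ℝ} (hf : DifferentiableAt ℝ f p) :
    pdz2 f p = fderiv ℝ f p (0, 1) :=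
  (hasDerivAt_pdz2 hf).unique <|
    hf.hasFDerivAt.comp_hasDerivAt p.2
      ((hasDerivAt_const p.2 p.1).prodMk (hasDerivAt_id p.2))

theorem pdr2_eq_fun_fderiv (hf : Differentiable ℝ f) : pdr2 f = fun p => fderiv ℝ f p (1, 0) :=
  funext fun p => pdr2_eq_fderiv (hf p)

theorem pdz2_eq_fun_fderiv (hf : Differentiable ℝ f) : pdz2 f = fun p => fderiv ℝ f p (0, 1) :=
  funext fun p => pdz2_eq_fderiv (hf p)

theorem contDiff_pdr2 {n : WithTop ℕ∞} (hf : ContDiff ℝ (n + 1) f) :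
    ContDiff ℝ n (pdr2 f) := by
  rw [pdr2_eq_fun_fderiv (hf.differentiable (by simp))]
  exact (hf.fderiv_right le_rfl).clm_apply contDiff_const

theorem contDiff_pdz2 {n : WithTop ℕ∞} (hf : ContDiff ℝ (n + 1) f) :
    ContDiff ℝ n (pdz2 f) := by
  rw [pdz2_eq_fun_fderiv (hf.differentiable (by simp))]
  exact (hf.fderiv_right le_rfl).clm_apply contDiff_const

theorem continuous_pdr2 (hf : ContDiff ℝ 1 f) : Continuous (pdr2 f) :=
  (contDiff_pdr2 (n := 0) (by simpa using hf)).continuous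

theorem continuous_pdz2 (hf : ContDiff ℝ 1 f) : Continuous (pdz2 f) :=
  (contDiff_pdz2 (n := 0) (by simpa using hf)).continuous

theorem pdr2_eq_zero_of_eventuallyEq_zero {p : ℝ × ℝ} (hf : f =ᶠ[𝓝 p] 0) : pdr2 f p = 0 := by
  have hslice : (fun s => f (s, p.2)) =ᶠ[𝓝 p.1] fun _ => 0 :=
    (continuous_id.prodMk continuous_const).continuousAt.eventually hf
  simp [pdr2, hslice.deriv_eq]

theorem pdz2_eq_zero_of_eventuallyEq_zero {p : ℝ × ℝ} (hf : f =ᶠ[𝓝 p] 0) : pdz2 f p = 0 := by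
  have hslice : (fun s => f (p.1, s)) =ᶠ[𝓝 p.2] fun _ => 0 :=
    (continuous_const.prodMk continuous_id).continuousAt.eventually hf
  simp [pdz2, hslice.deriv_eq]

theorem hasCompactSupport_pdr2 (hf : HasCompactSupport f) : HasCompactSupport (pdr2 f) :=
  hf.mono' fun p hp => by
    by_contra h
    exact hp (pdr2_eq_zero_of_eventuallyEq_zero (notMem_tsupport_iff_eventuallyEq.mp h))

theorem hasCompactSupport_pdz2 (hf : HasCompactSupport f) : HasCompactSupport (pdz2 f) :=
  hf.mono' fun p hp => by
    by_contra h
    exact hp (pdz2_eq_zero_of_eventuallyEq_zero (notMem_tsupport_iff_eventuallyEq.mp h))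

theorem pdr2_pdz2_comm (hf : ContDiff ℝ 2 f) : pdr2 (pdz2 f) = pdz2 (pdr2 f) := by
  funext p
  have hd : Differentiable ℝ f := hf.differentiable (by simp)
  have hd' : Differentiable ℝ (fderiv ℝ f) :=
    (hf.fderiv_right (m := 1) le_rfl).differentiable (by simp)
  rw [pdr2_eq_fun_fderiv hd, pdz2_eq_fun_fderiv hd,
    pdr2_eq_fderiv ((hd' p).clm_apply (differentiableAt_const _)),
    pdz2_eq_fderiv ((hd' p).clm_apply (differentiableAt_const _)),
    fderiv_clm_apply (hd' p) (differentiableAt_const _),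
    fderiv_clm_apply (hd' p) (differentiableAt_const _)]
  simpa using (hf.contDiffAt.isSymmSndFDerivAt (by simp)) (1, 0) (0, 1)

end PartialDerivatives

theorem HasCompactSupport.comp_prodMk_left {X Y M : Type*} [TopologicalSpace X]
    [TopologicalSpace Y] [R1Space Y] [Zero M] {f : X × Y → M} (hf : HasCompactSupport f)
    (x : X) : HasCompactSupport fun y => f (x, y) :=
  .intro (hf.image continuous_snd) fun _ hy =>
    image_eq_zero_of_notMem_tsupport fun h => hy ⟨_, h, rfl⟩

theorem HasCompactSupport.comp_prodMk_right {X Y M : Type*} [TopologicalSpace X]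
    [TopologicalSpace Y] [R1Space X] [Zero M] {f : X × Y → M} (hf : HasCompactSupport f)
    (y : Y) : HasCompactSupport fun x => f (x, y) :=
  .intro (hf.image continuous_fst) fun _ hx =>
    image_eq_zero_of_notMem_tsupport fun h => hx ⟨_, h, rfl⟩

section Integration

variable {f P Q : ℝ × ℝ → ℝ}

theorem integrable_comp_prodMk_left (hf : Continuous f) (hfc : HasCompactSupport f) (r : ℝ) :
    Integrable fun z => f (r, z) :=
  (hf.comp (continuous_const.prodMk continuous_id)).integrable_of_hasCompactSupport
    (hfc.comp_prodMk_left r)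

theorem integrable_comp_prodMk_right (hf : Continuous f) (hfc : HasCompactSupport f) (z : ℝ) :
    Integrable fun r => f (r, z) :=
  (hf.comp (continuous_id.prodMk continuous_const)).integrable_of_hasCompactSupport
    (hfc.comp_prodMk_right z)

theorem integrable_restrict_prod (hf : Integrable f) (s : Set ℝ) :
    Integrable f ((volume.restrict s).prod volume) := by
  rw [Measure.restrict_prod_eq_prod_univ, ← Measure.volume_eq_prod]
  exact hf.restrict

theorem integral_pdz2_eq_zero (hQ : ContDiff ℝ 1 Q) (hQc : HasCompactSupport Q) (r : ℝ) :
    ∫ z, pdz2 Q (r, z) = 0 := by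
  have hslice := hQc.comp_prodMk_left r
  simpa using integral_of_hasDerivAt_of_tendsto
    (fun z => hasDerivAt_pdz2 (hQ.differentiable one_ne_zero _))
    (integrable_comp_prodMk_left (continuous_pdz2 hQ) (hasCompactSupport_pdz2 hQc) r)
    (hslice.is_zero_at_infty.mono_left atBot_le_cocompact)
    (hslice.is_zero_at_infty.mono_left atTop_le_cocompact)

theorem integral_Ioi_pdr2_eq_zero (hP : ContDiff ℝ 1 P) (hPc : HasCompactSupport P) {z : ℝ}
    (hP0 : P (0, z) = 0) : ∫ r in Ioi 0, pdr2 P (r, z) = 0 := by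
  have hslice := hPc.comp_prodMk_right z
  have hint := integrable_comp_prodMk_right (continuous_pdr2 hP) (hasCompactSupport_pdr2 hPc) z
  simpa [hP0] using integral_Ioi_of_hasDerivAt_of_tendsto (a := 0)
    (hP.continuous.comp (continuous_id.prodMk continuous_const)).continuousWithinAt
    (fun r _ => hasDerivAt_pdr2 (hP.differentiable one_ne_zero _)) hint.integrableOn
    (hslice.is_zero_at_infty.mono_left atTop_le_cocompact)

theorem integral_Ioi_integral_pdr2_sub_pdz2 (hP : ContDiff ℝ 1 P) (hPc : HasCompactSupport P)
    (hQ : ContDiff ℝ 1 Q) (hQc : HasCompactSupport Q) (hP0 : ∀ z, P (0, z) = 0) :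
    ∫ r in Ioi 0, ∫ z, (pdr2 P (r, z) - pdz2 Q (r, z)) = 0 := by
  have hPr := continuous_pdr2 hP
  have hPrc := hasCompactSupport_pdr2 hPc
  have inner (r : ℝ) : ∫ z, (pdr2 P (r, z) - pdz2 Q (r, z)) = ∫ z, pdr2 P (r, z) := by
    rw [integral_sub (integrable_comp_prodMk_left hPr hPrc r)
      (integrable_comp_prodMk_left (continuous_pdz2 hQ) (hasCompactSupport_pdz2 hQc) r),
      integral_pdz2_eq_zero hQ hQc r, sub_zero]
  simp only [inner]
  rw [integral_integral_swap (f := fun r z => pdr2 P (r, z))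
    (integrable_restrict_prod (hPr.integrable_of_hasCompactSupport hPrc) _)]
  simp [integral_Ioi_pdr2_eq_zero hP hPc (hP0 _)]

theorem integral_Ioi_integral_add_pdr2_sub_pdz2 {g : ℝ → ℝ → ℝ}
    (hg : Continuous (uncurry g)) (hgc : HasCompactSupport (uncurry g))
    (hP : ContDiff ℝ 1 P) (hPc : HasCompactSupport P)
    (hQ : ContDiff ℝ 1 Q) (hQc : HasCompactSupport Q) (hP0 : ∀ z, P (0, z) = 0) :
    ∫ r in Ioi 0, ∫ z, (g r z + (pdr2 P (r, z) - pdz2 Q (r, z))) = ∫ r in Ioi 0, ∫ z, g r z := by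
  have hD : Continuous fun p => pdr2 P p - pdz2 Q p :=
    (continuous_pdr2 hP).sub (continuous_pdz2 hQ)
  have hDc : HasCompactSupport fun p => pdr2 P p - pdz2 Q p :=
    (hasCompactSupport_pdr2 hPc).sub (hasCompactSupport_pdz2 hQc)
  have inner (r : ℝ) : ∫ z, (g r z + (pdr2 P (r, z) - pdz2 Q (r, z))) =
      (∫ z, g r z) + ∫ z, (pdr2 P (r, z) - pdz2 Q (r, z)) :=
    integral_add (f := fun z => g r z) (integrable_comp_prodMk_left hg hgc r)
      (integrable_comp_prodMk_left hD hDc r)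
  simp only [inner]
  rw [integral_add (f := fun r => ∫ z, g r z)
    (integrable_restrict_prod (hg.integrable_of_hasCompactSupport hgc) _).integral_prod_left
    (integrable_restrict_prod (hD.integrable_of_hasCompactSupport hDc) _).integral_prod_left,
    integral_Ioi_integral_pdr2_sub_pdz2 hP hPc hQ hQc hP0, add_zero]

end Integration

section ProductRule

variable {f g : ℝ × ℝ → ℝ} {p : ℝ × ℝ}

theorem pdr2_mul (hf : DifferentiableAt ℝ f p) (hg : DifferentiableAt ℝ g p) :
    pdr2 (fun q => f q * g q) p = pdr2 f p * g p + f p * pdr2 g p :=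
  ((hasDerivAt_pdr2 hf).mul (hasDerivAt_pdr2 hg)).deriv

theorem pdz2_mul (hf : DifferentiableAt ℝ f p) (hg : DifferentiableAt ℝ g p) :
    pdz2 (fun q => f q * g q) p = pdz2 f p * g p + f p * pdz2 g p :=
  ((hasDerivAt_pdz2 hf).mul (hasDerivAt_pdz2 hg)).deriv

end ProductRule

theorem stretching_integrand_eq_add_pdr2_sub_pdz2 {vθ v3 w3 φ : ℝ × ℝ → ℝ}
    (hvθ : Differentiable ℝ vθ) (hv3 : ContDiff ℝ 2 v3) (hw3 : Differentiable ℝ w3)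
    (hφ : Differentiable ℝ φ) (r z : ℝ) :
    (deriv (fun s => s * vθ (s, z)) r * pdz2 v3 (r, z) -
        r * pdz2 vθ (r, z) * pdr2 v3 (r, z)) * w3 (r, z) * φ (r, z) ^ 2
      = r * vθ (r, z) * (-(pdz2 v3 (r, z)) * pdr2 w3 (r, z) * φ (r, z) ^ 2 -
          pdz2 v3 (r, z) * w3 (r, z) * pdr2 (fun p => φ p ^ 2) (r, z) +
          pdr2 v3 (r, z) * pdz2 w3 (r, z) * φ (r, z) ^ 2 +
          pdr2 v3 (r, z) * w3 (r, z) * pdz2 (fun p => φ p ^ 2) (r, z)) +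
        (pdr2 (fun p => p.1 * vθ p * pdz2 v3 p * w3 p * φ p ^ 2) (r, z) -
          pdz2 (fun p => p.1 * vθ p * pdr2 v3 p * w3 p * φ p ^ 2) (r, z)) := by
  have hv3r : Differentiable ℝ (pdr2 v3) :=
    (contDiff_pdr2 (n := 1) hv3).differentiable one_ne_zero
  have hv3z : Differentiable ℝ (pdz2 v3) :=
    (contDiff_pdz2 (n := 1) hv3).differentiable one_ne_zero
  have hrvθ : pdr2 (fun p => p.1 * vθ p) (r, z) = deriv (fun s => s * vθ (s, z)) r := rfl
  have hzvθ : pdz2 (fun p => p.1 * vθ p) (r, z) = r * pdz2 vθ (r, z) :=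
    ((hasDerivAt_pdz2 (hvθ _)).const_mul r).deriv
  rw [pdr2_mul, pdr2_mul, pdr2_mul, pdz2_mul, pdz2_mul, pdz2_mul, hrvθ, hzvθ, pdr2_pdz2_comm hv3]
  · ring
  all_goals fun_prop

theorem stmt_14_general (vθ v3 : ℝ × ℝ → ℝ) (hvθ : ContDiff ℝ 2 vθ) (hv3 : ContDiff ℝ 2 v3)
    (w3 : ℝ × ℝ → ℝ) (hw3 : ContDiff ℝ 1 w3)
    (φ : ℝ × ℝ → ℝ) (hφ : ContDiff ℝ 1 φ) (hφc : HasCompactSupport φ) :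
    ∫ r in Set.Ioi (0:ℝ), ∫ z : ℝ,
        (deriv (fun s => s * vθ (s, z)) r * pdz2 v3 (r, z) -
          r * pdz2 vθ (r, z) * pdr2 v3 (r, z)) * w3 (r, z) * φ (r, z) ^ 2
      = ∫ r in Set.Ioi (0:ℝ), ∫ z : ℝ,
        r * vθ (r, z) * (-(pdz2 v3 (r, z)) * pdr2 w3 (r, z) * φ (r, z) ^ 2 -
          pdz2 v3 (r, z) * w3 (r, z) * pdr2 (fun p => φ p ^ 2) (r, z) +
          pdr2 v3 (r, z) * pdz2 w3 (r, z) * φ (r, z) ^ 2 +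
          pdr2 v3 (r, z) * w3 (r, z) * pdz2 (fun p => φ p ^ 2) (r, z)) := by
  have hφ2 : ContDiff ℝ 1 fun p => φ p ^ 2 := hφ.pow 2
  have hw3r := continuous_pdr2 hw3
  have hw3z := continuous_pdz2 hw3
  have hφ2r := continuous_pdr2 hφ2
  have hφ2z := continuous_pdz2 hφ2
  have hv3r := contDiff_pdr2 (n := 1) hv3
  have hv3z := contDiff_pdz2 (n := 1) hv3
  have hvθ1 : ContDiff ℝ 1 vθ := hvθ.of_le one_le_two
  simp only [stretching_integrand_eq_add_pdr2_sub_pdz2 (hvθ.differentiable two_ne_zero) hv3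
    (hw3.differentiable one_ne_zero) (hφ.differentiable one_ne_zero)]
  refine integral_Ioi_integral_add_pdr2_sub_pdz2 ?_ ?_ (by fun_prop) ?_ (by fun_prop) ?_ (by simp)
  · simp only [uncurry_def]
    fun_prop
  · refine .intro' hφc (isClosed_tsupport φ) fun ⟨r, z⟩ hp => ?_
    have hφ0 := notMem_tsupport_iff_eventuallyEq.mp hp
    have hφ20 : (fun q => φ q ^ 2) =ᶠ[𝓝 (r, z)] 0 := hφ0.mono fun q hq => by simp [hq]
    simp [hφ0.eq_of_nhds, pdr2_eq_zero_of_eventuallyEq_zero hφ20,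
      pdz2_eq_zero_of_eventuallyEq_zero hφ20]
  all_goals exact hφc.mono fun p hp h => hp (by simp [h])

/-- For `C²` functions `v_θ, v₃` of `(r,z)`, a `C¹` function `w₃` with
`r w₃ = ∂_r(r v_θ)`, and a `C¹` compactly supported `φ`,
`∫₀^∞∫_ℝ [∂_r(r v_θ) ∂₃v₃ − r ∂₃v_θ ∂_r v₃] w₃ φ² dz dr
  = ∫₀^∞∫_ℝ r v_θ [−∂₃v₃ ∂_r w₃ φ² − ∂₃v₃ w₃ ∂_r(φ²) + ∂_r v₃ ∂₃w₃ φ² + ∂_r v₃ w₃ ∂₃(φ²)] dz dr`. -/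
theorem stmt_14 (vθ v3 : ℝ × ℝ → ℝ) (hvθ : ContDiff ℝ 2 vθ) (hv3 : ContDiff ℝ 2 v3)
    (w3 : ℝ × ℝ → ℝ) (hw3 : ContDiff ℝ 1 w3)
    (hrel : ∀ p : ℝ × ℝ, p.1 * w3 p = deriv (fun s => s * vθ (s, p.2)) p.1)
    (φ : ℝ × ℝ → ℝ) (hφ : ContDiff ℝ 1 φ) (hφc : HasCompactSupport φ) :
    ∫ r in Set.Ioi (0:ℝ), ∫ z : ℝ,
        (deriv (fun s => s * vθ (s, z)) r * pdz2 v3 (r, z) -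
          r * pdz2 vθ (r, z) * pdr2 v3 (r, z)) * w3 (r, z) * φ (r, z) ^ 2
      = ∫ r in Set.Ioi (0:ℝ), ∫ z : ℝ,
        r * vθ (r, z) * (-(pdz2 v3 (r, z)) * pdr2 w3 (r, z) * φ (r, z) ^ 2 -
          pdz2 v3 (r, z) * w3 (r, z) * pdr2 (fun p => φ p ^ 2) (r, z) +
          pdr2 v3 (r, z) * pdz2 w3 (r, z) * φ (r, z) ^ 2 +
          pdr2 v3 (r, z) * w3 (r, z) * pdz2 (fun p => φ p ^ 2) (r, z)) :=
  stmt_14_general vθ v3 hvθ hv3 w3 hw3 φ hφ hφc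
end
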